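/- Let N ≥ 7 be an odd natural number and let t : Fin N → ℝ satisfy t₀ ≤ t₁ ≤ … ≤ t_{N−1} and t_{N−1} − t₀ < 2π. For i ∈ Fin N define the circular 3-span s_i as follows: s_i = t_{i+2} − t_i if i + 2 ≤ N − 1, s_{N−2} = 2π + t₀ − t_{N−2}, and s_{N−1} = 2π + t₁ − t_{N−1}. If s_i > π for some i, then there exist pairwise distinct indices i, j, l in Fin N such that cos(t_i − t_j) + cos(t_j − t_l) + cos(t_i − t_l) > 1 + 2·cos(3π/(N−1)). -/

import Mathlib

/-!
Lift the cyclically ordered points to a nondecreasing sequence `L : ℕ → ℝ` with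
`L (k + N) = L k + 2π`. The circular 3-spans are `L (i + 2) - L i`, which telescope to `4π`;
if one of them exceeds `π`, the other `N - 1` sum to less than `3π`, so one of them is smaller
than `3π / (N - 1)`. Three consecutive points spanning an arc of length `a + b < c ≤ π` have
cost `cos a + cos b + cos (a + b) > 1 + 2 cos c`, because `cos a + cos b ≥ 1 + cos (a + b)`
on that range and `cos` is decreasing on `[0, π]`.
-/

open Real Finset

lemma cos_two_mul_add_cos_two_mul_sub_one_sub_cos (x y : ℝ) :
    cos (2 * x) + cos (2 * y) - 1 - cos (2 * x + 2 * y) = 4 * sin x * sin y * cos (x + y) := by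
  rw [show 2 * x + 2 * y = 2 * (x + y) by ring, cos_two_mul, cos_two_mul, cos_two_mul, cos_add]
  linear_combination
    (2 * sin y ^ 2) * sin_sq_add_cos_sq x + (2 * (1 - cos x ^ 2)) * sin_sq_add_cos_sq y

lemma one_add_cos_add_le_cos_add_cos {a b : ℝ} (ha : 0 ≤ a) (hb : 0 ≤ b) (hab : a + b ≤ π) :
    1 + cos (a + b) ≤ cos a + cos b := by
  have h := cos_two_mul_add_cos_two_mul_sub_one_sub_cos (a / 2) (b / 2)
  rw [mul_div_cancel₀ a two_ne_zero, mul_div_cancel₀ b two_ne_zero] at h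
  have hsa := sin_nonneg_of_nonneg_of_le_pi (x := a / 2) (by linarith) (by linarith)
  have hsb := sin_nonneg_of_nonneg_of_le_pi (x := b / 2) (by linarith) (by linarith)
  have hc := cos_nonneg_of_neg_pi_div_two_le_of_le (x := a / 2 + b / 2) (by linarith [pi_pos])
    (by linarith)
  have := mul_nonneg (mul_nonneg (mul_nonneg zero_le_four hsa) hsb) hc
  linarith

lemma one_add_two_cos_lt_cos_sub_add_cos_sub_add_cos_sub {x y z c : ℝ} (hxy : x ≤ y)
    (hyz : y ≤ z) (hxz : z - x < c) (hc : c ≤ π) :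
    1 + 2 * cos c < cos (x - y) + cos (y - z) + cos (x - z) := by
  have hab := one_add_cos_add_le_cos_add_cos (sub_nonneg.mpr hxy) (sub_nonneg.mpr hyz)
    (by linarith)
  have hcos : cos c < cos (z - x) :=
    cos_lt_cos_of_nonneg_of_le_pi (by linarith) hc hxz
  rw [← cos_neg (x - y), ← cos_neg (y - z), ← cos_neg (x - z)]
  simp only [neg_sub]
  rw [show y - x + (z - y) = z - x by ring] at hab
  linarith

lemma exists_apply_lt_div_of_sum_eq {ι : Type*} [Fintype ι] {f : ι → ℝ} {S a : ℝ} {i₀ : ι}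
    (hS : ∑ i, f i = S) (ha : a < f i₀) (hcard : 1 < Fintype.card ι) :
    ∃ j, f j < (S - a) / (Fintype.card ι - 1) := by
  classical
  by_contra! h
  have hpos : (0 : ℝ) < Fintype.card ι - 1 := by
    have : (1 : ℝ) < Fintype.card ι := by exact_mod_cast hcard
    linarith
  have hle := card_nsmul_le_sum (univ.erase i₀) f _ fun j _ => h j
  rw [card_erase_of_mem (mem_univ i₀), card_univ, nsmul_eq_mul,
    Nat.cast_sub hcard.le, Nat.cast_one, mul_div_cancel₀ _ hpos.ne'] at hle
  have := sum_erase_add univ f (mem_univ i₀)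
  linarith

lemma sum_range_add_sub_of_add_period {M : Type*} [AddCommGroup M] {f : ℕ → M} {N : ℕ}
    {c : M} (hf : ∀ k, f (k + N) = f k + c) (m : ℕ) :
    ∑ i ∈ range N, (f (i + m) - f i) = m • c := by
  have h := sum_range_add f N m
  rw [add_comm N m, sum_range_add f m N] at h
  calc ∑ i ∈ range N, (f (i + m) - f i)
      = ∑ i ∈ range N, f (m + i) - ∑ i ∈ range N, f i := by
        simp only [sum_sub_distrib, add_comm]
    _ = ∑ i ∈ range m, (f (N + i) - f i) := by
      rw [sum_sub_distrib, sub_eq_sub_iff_add_eq_add, add_comm, h, add_comm]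
    _ = m • c := by simp [add_comm N, hf]

lemma Fin.ofNat_ne_ofNat {N : ℕ} [NeZero N] {a b : ℕ} (hab : a < b) (hba : b < a + N) :
    Fin.ofNat N a ≠ Fin.ofNat N b := by
  intro h
  have hmod : (b - a) % N = 0 :=
    Nat.sub_mod_eq_zero_of_mod_eq (by simpa using (congrArg Fin.val h).symm)
  have := Nat.le_of_dvd (by omega) (Nat.dvd_of_mod_eq_zero hmod)
  omega

section CircularLift

variable {N : ℕ} [NeZero N] (t : Fin N → ℝ)

noncomputable def circularLift (k : ℕ) : ℝ := t (Fin.ofNat N k) + 2 * π * (k / N : ℕ)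

lemma circularLift_val (i : Fin N) : circularLift t i = t i := by
  simp [circularLift, Nat.div_eq_of_lt i.isLt]

lemma circularLift_add_self (k : ℕ) : circularLift t (k + N) = circularLift t k + 2 * π := by
  simp only [circularLift, Fin.ofNat, Nat.add_mod_right, Nat.add_div_right _ (NeZero.pos N)]
  push_cast
  ring

lemma cos_circularLift_sub (a b : ℕ) :
    cos (circularLift t a - circularLift t b) = cos (t (Fin.ofNat N a) - t (Fin.ofNat N b)) := by
  rw [← cos_add_int_mul_two_pi _ (((b / N : ℕ) : ℤ) - ((a / N : ℕ) : ℤ))]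
  congr 1
  simp only [circularLift, Int.cast_sub, Int.cast_natCast]
  ring

lemma monotone_circularLift (hmono : Monotone t) (hwrap : ∀ i j, t i ≤ t j + 2 * π) :
    Monotone (circularLift t) := by
  refine monotone_nat_of_le_succ fun k => ?_
  have hN := NeZero.pos N
  simp only [circularLift]
  rcases Nat.lt_or_ge (k % N + 1) N with hlt | hge
  · obtain ⟨hdiv, hmod⟩ := (Nat.div_mod_unique hN).mpr
      (⟨by linarith [Nat.mod_add_div k N], hlt⟩ : k % N + 1 + N * (k / N) = k + 1 ∧ _)
    rw [hdiv]
    have : Fin.ofNat N k ≤ Fin.ofNat N (k + 1) := by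
      rw [Fin.le_def, Fin.val_ofNat, Fin.val_ofNat, hmod]; omega
    linarith [hmono this]
  · obtain ⟨hdiv, hmod⟩ := (Nat.div_mod_unique hN).mpr
      (⟨by rw [mul_add, mul_one]; linarith [Nat.mod_add_div k N, Nat.mod_lt k hN], hN⟩ :
        0 + N * (k / N + 1) = k + 1 ∧ _)
    rw [hdiv]
    push_cast
    linarith [hwrap (Fin.ofNat N k) (Fin.ofNat N (k + 1))]

lemma circularLift_add_two_sub (hN : 2 ≤ N) (i : Fin N) :
    circularLift t ((i : ℕ) + 2) - circularLift t i =
      (if (i : ℕ) + 2 < N then (0 : ℝ) else 2 * π) +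
        t ⟨((i : ℕ) + 2) % N, Nat.mod_lt _ (NeZero.pos N)⟩ - t i := by
  have hi := i.isLt
  rw [circularLift_val]
  simp only [circularLift]
  split_ifs with h
  · rw [Nat.div_eq_of_lt h, Nat.cast_zero, mul_zero, add_zero, zero_add]
    rfl
  · rw [Nat.div_eq_of_lt_le (k := 1) (by omega) (by omega), Nat.cast_one, mul_one, add_comm]
    rfl

end CircularLift

theorem stmt_19 (N : ℕ) (hN : 7 ≤ N) (t : Fin N → ℝ)
    (hmono : Monotone t)
    (hspan : t ⟨N - 1, by omega⟩ - t ⟨0, by omega⟩ < 2 * Real.pi)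
    (s : Fin N → ℝ)
    (hs : ∀ i : Fin N,
      s i = (if (i : ℕ) + 2 < N then (0 : ℝ) else 2 * Real.pi) +
        t ⟨((i : ℕ) + 2) % N, Nat.mod_lt _ (by omega)⟩ - t i)
    (hbig : ∃ i : Fin N, s i > Real.pi) :
    ∃ i j l : Fin N, i ≠ j ∧ i ≠ l ∧ j ≠ l ∧
      Real.cos (t i - t j) + Real.cos (t j - t l) + Real.cos (t i - t l) >
        1 + 2 * Real.cos (3 * Real.pi / ((N : ℝ) - 1)) := by
  have : NeZero N := ⟨by omega⟩
  have hwrap (i j : Fin N) : t i ≤ t j + 2 * π := by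
    have := hmono (show i ≤ ⟨N - 1, by omega⟩ from
      Fin.le_def.mpr (Nat.le_sub_one_of_lt i.isLt))
    have := hmono (show (⟨0, by omega⟩ : Fin N) ≤ j from Fin.le_def.mpr (Nat.zero_le _))
    linarith
  have hL := monotone_circularLift t hmono hwrap
  have hsL (i : Fin N) : s i = circularLift t ((i : ℕ) + 2) - circularLift t i := by
    rw [hs i, circularLift_add_two_sub t (by omega)]
  have hsum : ∑ i, s i = 4 * π := by
    simp_rw [hsL]
    rw [Fin.sum_univ_eq_sum_range (fun i => circularLift t (i + 2) - circularLift t i),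
      sum_range_add_sub_of_add_period (circularLift_add_self t)]
    ring
  obtain ⟨i₀, hi₀⟩ := hbig
  obtain ⟨j, hj⟩ := exists_apply_lt_div_of_sum_eq hsum hi₀ (by rw [Fintype.card_fin]; omega)
  rw [Fintype.card_fin, show 4 * π - π = 3 * π by ring] at hj
  have hc : 3 * π / ((N : ℝ) - 1) ≤ π := by
    have : (7 : ℝ) ≤ N := by exact_mod_cast hN
    rw [div_le_iff₀ (by linarith)]
    nlinarith [pi_pos]
  refine ⟨Fin.ofNat N j, Fin.ofNat N ((j : ℕ) + 1), Fin.ofNat N ((j : ℕ) + 2),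
    Fin.ofNat_ne_ofNat (by omega) (by omega), Fin.ofNat_ne_ofNat (by omega) (by omega),
    Fin.ofNat_ne_ofNat (by omega) (by omega), ?_⟩
  simp only [← cos_circularLift_sub]
  exact one_add_two_cos_lt_cos_sub_add_cos_sub_add_cos_sub (hL (by omega)) (hL (by omega))
    (by rwa [← hsL]) hc
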